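/- Let L₁, L₂, L_k ∈ ℝ³ × ℝ³ be Plücker lines with L_k = L(q, d) for some q, d ∈ ℝ³, and let c ∈ ℝ satisfy L₁ = L₂ + c • L_k. Let P = (p, w) be a homogeneous point lying on L(q, d), i.e., either w ≠ 0 and p/w = q + t d for some t ∈ ℝ, or w = 0 and p = c' d for some c' ∈ ℝ. Then for every homogeneous point Q ∈ ℝ³ × ℝ: ⟨L₁, P ∨ Q⟩ = ⟨L₂, P ∨ Q⟩. (Shared-points principle: if the Jacobian lines of a child body and its parent differ by a multiple of the joint axis line L_k, then any point shared on the joint axis contributes identically to the dynamics regressor rows of both bodies.) -/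
import Mathlib


open Matrix

/-- The cross product on `ℝ³`. -/
def cross3 (a b : Fin 3 → ℝ) : Fin 3 → ℝ := crossProduct a b

/-- The Plücker line through the point `q` with direction `d`:
`L(q, d) = (d, q × d)`. -/
def pluckerLine (q d : Fin 3 → ℝ) : (Fin 3 → ℝ) × (Fin 3 → ℝ) := (d, cross3 q d)

/-- The join of two homogeneous points `P₁ = (p₁, w₁)` and `P₂ = (p₂, w₂)`:
`P₁ ∨ P₂ = (w₁ p₂ − w₂ p₁, p₁ × p₂)`. -/
def joinPts (P Q : (Fin 3 → ℝ) × ℝ) : (Fin 3 → ℝ) × (Fin 3 → ℝ) :=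
  (P.2 • Q.1 - Q.2 • P.1, cross3 P.1 Q.1)

/-- The reciprocal product of two Plücker lines `(d₁, m₁)` and `(d₂, m₂)`:
`⟨L₁, L₂⟩ = d₁ ⬝ m₂ + d₂ ⬝ m₁`. -/
def recipProd (L₁ L₂ : (Fin 3 → ℝ) × (Fin 3 → ℝ)) : ℝ := L₁.1 ⬝ᵥ L₂.2 + L₂.1 ⬝ᵥ L₁.2

/-- A homogeneous point `P = (p, w)` lies on the Plücker line `L(q, d)` if either it is a
Euclidean point of the line (`w ≠ 0` and `p / w = q + t d` for some `t`), or it is an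
infinite point in the direction of the line (`w = 0` and `p = c' d` for some `c'`). -/
def OnLine (q d : Fin 3 → ℝ) (P : (Fin 3 → ℝ) × ℝ) : Prop :=
  (P.2 ≠ 0 ∧ ∃ t : ℝ, P.2⁻¹ • P.1 = q + t • d) ∨ (P.2 = 0 ∧ ∃ c' : ℝ, P.1 = c' • d)

lemma key (q d : Fin 3 → ℝ) (P Q : (Fin 3 → ℝ) × ℝ) (hP : OnLine q d P) :
    recipProd (pluckerLine q d) (joinPts P Q) = 0 := by
  obtain ⟨w, t, h⟩ | ⟨w, c', h⟩ := hP
  · have hp : P.1 = P.2 • (q + t • d) := by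
      rw [← h, smul_smul, mul_inv_cancel₀ w, one_smul]
    simp only [recipProd, pluckerLine, joinPts, cross3, dotProduct,
      Fin.sum_univ_three, cross_apply, hp, Pi.add_apply, Pi.smul_apply, Pi.sub_apply, smul_eq_mul,
      Matrix.cons_val_zero, Matrix.cons_val_one, Matrix.head_cons, Matrix.cons_val_two,
      Matrix.tail_cons]
    ring
  · simp only [recipProd, pluckerLine, joinPts, cross3, dotProduct,
      Fin.sum_univ_three, cross_apply, h, w, Pi.add_apply, Pi.smul_apply, Pi.sub_apply, smul_eq_mul,
      Matrix.cons_val_zero, Matrix.cons_val_one, Matrix.head_cons, Matrix.cons_val_two,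
      Matrix.tail_cons]
    ring

/-- **Shared-points principle.** If the Jacobian lines of a child body and its parent
differ by a multiple of the joint axis line, `L₁ = L₂ + c • L(q, d)`, then any
homogeneous point `P` lying on the joint axis contributes identically to the dynamics
regressor rows of both bodies: `⟨L₁, P ∨ Q⟩ = ⟨L₂, P ∨ Q⟩` for every homogeneous
point `Q`. -/
theorem shared_points_principle
    (L₁ L₂ : (Fin 3 → ℝ) × (Fin 3 → ℝ)) (q d : Fin 3 → ℝ) (c : ℝ)
    (hL : L₁ = L₂ + c • pluckerLine q d)
    (P : (Fin 3 → ℝ) × ℝ) (hP : OnLine q d P) :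
    ∀ Q : (Fin 3 → ℝ) × ℝ, recipProd L₁ (joinPts P Q) = recipProd L₂ (joinPts P Q) := by
  intro Q
  subst hL
  have hk := key q d P Q hP
  simp only [recipProd, pluckerLine, joinPts, Prod.fst_add, Prod.snd_add, Prod.smul_fst,
    Prod.smul_snd, add_dotProduct, dotProduct_add, smul_dotProduct, dotProduct_smul,
    smul_eq_mul] at *
  linear_combination c * hk
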